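/- Let i, j ∈ {0,1,2} and let s be a real number with s ≥ 1. Then |γ_{i⊗j}'(s)/γ_{i⊗j}(s)| ≤ (d_{ij}/2)·(11/3 + log π + log(s/2 + 3)) + 1. -/

import Mathlib

open Real

/-- The local parameters at infinity of the `k`-th symmetric power, for `k ∈ {0,1,2}`:
`P_0 = {0}`, `P_1 = {1/2, 3/2}`, `P_2 = {1, 1, 2}`. -/
noncomputable def localParams : ℕ → List ℝ
  | 0 => [0]
  | 1 => [1 / 2, 3 / 2]
  | 2 => [1, 1, 2]
  | _ => []

/-- The Rankin–Selberg gamma factor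
`γ_{i⊗j}(s) = ∏_{κ ∈ P_i} ∏_{ν ∈ P_j} π^(-s/2) Γ((s + κ + ν)/2)`. -/
noncomputable def rsGamma (i j : ℕ) (s : ℝ) : ℝ :=
  ((localParams i).map fun κ =>
    ((localParams j).map fun ν =>
      Real.pi ^ (-s / 2) * Real.Gamma ((s + κ + ν) / 2)).prod).prod

/-!
Log-convexity of `Γ` traps the digamma function `ψ = Γ'/Γ` between two slopes of `log Γ`:
`ψ(x) ≤ log Γ(x + 1) - log Γ(x) = log x ≤ ψ(x + 1) = ψ(x) + 1/x`, so `|ψ(x)| ≤ |log x| + 1/x`.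
The logarithmic derivative of `γ_{i⊗j}` is the sum over its `d_{ij}` factors of
`(ψ((s + κ + ν)/2) - log π)/2`, and since `(s + κ + ν)/2 ∈ [1/2, s/2 + 2]` every summand is at
most `(2 + log π + log (s/2 + 3))/2` in absolute value.
-/

open Set Topology

namespace Real

theorem differentiableAt_Gamma_of_pos {x : ℝ} (hx : 0 < x) : DifferentiableAt ℝ Gamma x :=
  differentiableOn_Gamma_Ioi.differentiableAt (Ioi_mem_nhds hx)

theorem hasDerivAt_log_Gamma {x : ℝ} (hx : 0 < x) :
    HasDerivAt (log ∘ Gamma) (logDeriv Gamma x) x :=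
  (differentiableAt_Gamma_of_pos hx).hasDerivAt.log (Gamma_pos_of_pos hx).ne'

theorem slope_log_Gamma_add_one {x : ℝ} (hx : 0 < x) :
    slope (log ∘ Gamma) x (x + 1) = log x := by
  rw [slope_def_field, Function.comp_apply, Function.comp_apply, Gamma_add_one hx.ne',
    log_mul hx.ne' (Gamma_pos_of_pos hx).ne']
  ring

theorem logDeriv_Gamma_add_one {x : ℝ} (hx : 0 < x) :
    logDeriv Gamma (x + 1) = logDeriv Gamma x + x⁻¹ := by
  have hshift : logDeriv (Gamma ∘ (· + 1)) x = logDeriv Gamma (x + 1) := by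
    rw [logDeriv_comp (g := (· + 1)) (differentiableAt_Gamma_of_pos (by linarith))
      (by fun_prop)]
    simp
  have hfun : Gamma ∘ (· + 1) =ᶠ[𝓝 x] fun y => y * Gamma y := by
    filter_upwards [Ioi_mem_nhds hx] with y hy using Gamma_add_one hy.ne'
  rw [← hshift, (logDeriv_congr_nhds hfun).eq_of_nhds, logDeriv_mul (f := fun y => y) x hx.ne'
    (Gamma_pos_of_pos hx).ne' differentiableAt_id (differentiableAt_Gamma_of_pos hx)]
  simp [add_comm]

theorem logDeriv_Gamma_le_log {x : ℝ} (hx : 0 < x) : logDeriv Gamma x ≤ log x := by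
  simpa [slope_log_Gamma_add_one hx] using convexOn_log_Gamma.le_slope_of_hasDerivAt
    (mem_Ioi.2 hx) (mem_Ioi.2 (by linarith)) (lt_add_one x) (hasDerivAt_log_Gamma hx)

theorem log_sub_inv_le_logDeriv_Gamma {x : ℝ} (hx : 0 < x) :
    log x - x⁻¹ ≤ logDeriv Gamma x := by
  have h := convexOn_log_Gamma.slope_le_of_hasDerivAt (mem_Ioi.2 hx)
    (mem_Ioi.2 (by linarith)) (lt_add_one x) (hasDerivAt_log_Gamma (by linarith))
  rw [slope_log_Gamma_add_one hx, logDeriv_Gamma_add_one hx] at h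
  linarith

theorem abs_logDeriv_Gamma_le {x : ℝ} (hx : 0 < x) :
    |logDeriv Gamma x| ≤ |log x| + x⁻¹ := by
  have hupper := logDeriv_Gamma_le_log hx
  have hlower := log_sub_inv_le_logDeriv_Gamma hx
  rw [abs_le]
  constructor <;> linarith [le_abs_self (log x), neg_abs_le (log x), inv_pos.2 hx]

end Real

theorem List.norm_sum_map_le_length_mul {ι E : Type*} [SeminormedAddCommGroup E] {L : List ι}
    {g : ι → E} {C : ℝ} (h : ∀ i ∈ L, ‖g i‖ ≤ C) : ‖(L.map g).sum‖ ≤ L.length * C := by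
  induction L with
  | nil => simp
  | cons a L ih =>
    rw [List.forall_mem_cons] at h
    simp only [List.map_cons, List.sum_cons, List.length_cons]
    push_cast
    linarith [norm_add_le (g a) (L.map g).sum, ih h.2]

section ListProd

variable {ι 𝕜 𝕜' : Type*} [NontriviallyNormedField 𝕜] [NontriviallyNormedField 𝕜']
  [NormedAlgebra 𝕜 𝕜'] {L : List ι} {f : ι → 𝕜 → 𝕜'} {x : 𝕜}

theorem differentiableAt_list_prod (hd : ∀ i ∈ L, DifferentiableAt 𝕜 (f i) x) :
    DifferentiableAt 𝕜 (fun y => (L.map (f · y)).prod) x := by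
  induction L with
  | nil => simp
  | cons a L ih =>
    rw [List.forall_mem_cons] at hd
    simpa only [List.map_cons, List.prod_cons] using hd.1.fun_mul (ih hd.2)

theorem logDeriv_list_prod (hf : ∀ i ∈ L, f i x ≠ 0)
    (hd : ∀ i ∈ L, DifferentiableAt 𝕜 (f i) x) :
    logDeriv (fun y => (L.map (f · y)).prod) x = (L.map fun i => logDeriv (f i) x).sum := by
  induction L with
  | nil => simp
  | cons a L ih =>
    rw [List.forall_mem_cons] at hf hd
    simp only [List.map_cons, List.prod_cons, List.sum_cons]
    rw [logDeriv_mul x hf.1 (List.prod_ne_zero (by simpa using hf.2)) hd.1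
      (differentiableAt_list_prod hd.2), ih hf.2 hd.2]

end ListProd

theorem abs_logDeriv_list_prod_le {ι : Type*} {L : List ι} {f : ι → ℝ → ℝ} {x C : ℝ}
    (hf : ∀ i ∈ L, f i x ≠ 0) (hd : ∀ i ∈ L, DifferentiableAt ℝ (f i) x)
    (hC : ∀ i ∈ L, |logDeriv (f i) x| ≤ C) :
    |logDeriv (fun y => (L.map (f · y)).prod) x| ≤ L.length * C := by
  rw [logDeriv_list_prod hf hd]
  simpa only [Real.norm_eq_abs] using List.norm_sum_map_le_length_mul
    (g := fun i => logDeriv (f i) x) (by simpa only [Real.norm_eq_abs] using hC)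

noncomputable def gammaFactor (μ s : ℝ) : ℝ := π ^ (-s / 2) * Gamma ((s + μ) / 2)

section GammaFactor

variable {μ s : ℝ}

theorem gammaFactor_pos (h : 0 < s + μ) : 0 < gammaFactor μ s :=
  mul_pos (rpow_pos_of_pos pi_pos _) (Gamma_pos_of_pos (by linarith))

theorem hasDerivAt_gammaFactor (h : 0 < s + μ) :
    HasDerivAt (gammaFactor μ)
      (log π * (-1 / 2) * π ^ (-s / 2) * Gamma ((s + μ) / 2) +
        π ^ (-s / 2) * (deriv Gamma ((s + μ) / 2) * (1 / 2))) s :=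
  (((hasDerivAt_id s).neg.div_const 2).const_rpow pi_pos).fun_mul <|
    (differentiableAt_Gamma_of_pos (by linarith)).hasDerivAt.comp s
      (((hasDerivAt_id s).add_const μ).div_const 2)

theorem logDeriv_gammaFactor (h : 0 < s + μ) :
    logDeriv (gammaFactor μ) s = (logDeriv Gamma ((s + μ) / 2) - log π) / 2 := by
  have hΓ := (Gamma_pos_of_pos (show 0 < (s + μ) / 2 by linarith)).ne'
  have hπ := (rpow_pos_of_pos pi_pos (-s / 2)).ne'
  rw [logDeriv_apply, (hasDerivAt_gammaFactor h).deriv, logDeriv_apply, gammaFactor]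
  field_simp
  ring

theorem abs_logDeriv_gammaFactor_le (hμ : 0 ≤ μ) (hμ' : μ ≤ 4) (hs : 1 ≤ s) :
    |logDeriv (gammaFactor μ) s| ≤ (2 + log π + log (s / 2 + 3)) / 2 := by
  set x := (s + μ) / 2 with hx_def
  have hx : 1 / 2 ≤ x := by linarith
  have hlog_pi : 0 ≤ log π := log_nonneg (by linarith [pi_gt_three])
  have hlog_x : |log x| ≤ log (s / 2 + 3) := by
    refine abs_le.2 ⟨?_, log_le_log (by linarith) (by linarith)⟩
    calc -log (s / 2 + 3) ≤ -log 2 := by gcongr; linarith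
      _ = log (1 / 2) := by rw [one_div, log_inv]
      _ ≤ log x := log_le_log (by norm_num) hx
  have hinv : x⁻¹ ≤ 2 := by rw [inv_le_comm₀ (by linarith) two_pos]; linarith
  rw [logDeriv_gammaFactor (by linarith), abs_div, abs_two]
  gcongr
  calc |logDeriv Gamma x - log π| ≤ |logDeriv Gamma x| + |log π| := abs_sub _ _
    _ ≤ |log x| + x⁻¹ + log π := by
        rw [abs_of_nonneg hlog_pi]; linarith [abs_logDeriv_Gamma_le (by linarith : 0 < x)]
    _ ≤ 2 + log π + log (s / 2 + 3) := by linarith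

end GammaFactor

theorem rsGamma_eq_prod_gammaFactor (i j : ℕ) :
    rsGamma i j = fun s => ((localParams i).map fun κ =>
      ((localParams j).map fun ν => gammaFactor (κ + ν) s).prod).prod := by
  funext s
  simp only [rsGamma, gammaFactor, add_assoc]

theorem length_localParams {k : ℕ} (hk : k ≤ 2) : (localParams k).length = k + 1 := by
  interval_cases k <;> rfl

theorem mem_Icc_of_mem_localParams {k : ℕ} {a : ℝ} (ha : a ∈ localParams k) : a ∈ Icc 0 2 := by
  rcases k with _ | _ | _ | k <;>
    simp only [localParams, List.mem_cons, List.not_mem_nil, or_false] at ha <;>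
    rcases ha with rfl | rfl | rfl <;> norm_num

/-- For `i, j ∈ {0,1,2}` and real `s ≥ 1`:
`|γ_{i⊗j}'(s)/γ_{i⊗j}(s)| ≤ (d_{ij}/2)(11/3 + log π + log(s/2 + 3)) + 1`,
where `d_{ij} = (i+1)(j+1)`. -/
theorem rsGamma_logDeriv_bound_pos (i j : ℕ) (hi : i ≤ 2) (hj : j ≤ 2)
    (s : ℝ) (hs : 1 ≤ s) :
    |deriv (rsGamma i j) s / rsGamma i j s| ≤
      (((i : ℝ) + 1) * ((j : ℝ) + 1)) / 2 * (11 / 3 + Real.log Real.pi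
        + Real.log (s / 2 + 3)) + 1 := by
  have hκν : ∀ κ ∈ localParams i, ∀ ν ∈ localParams j, 0 ≤ κ + ν ∧ κ + ν ≤ 4 := by
    intro κ hκ ν hν
    obtain ⟨hκ₀, hκ₂⟩ := mem_Icc_of_mem_localParams hκ
    obtain ⟨hν₀, hν₂⟩ := mem_Icc_of_mem_localParams hν
    constructor <;> linarith
  have hpos : ∀ κ ∈ localParams i, ∀ ν ∈ localParams j, 0 < s + (κ + ν) :=
    fun κ hκ ν hν => by linarith [(hκν κ hκ ν hν).1]
  have hinner : ∀ κ ∈ localParams i, |logDeriv (fun y => ((localParams j).map fun ν =>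
      gammaFactor (κ + ν) y).prod) s| ≤ (j + 1) * ((2 + log π + log (s / 2 + 3)) / 2) := by
    intro κ hκ
    have h := abs_logDeriv_list_prod_le (fun ν hν => (gammaFactor_pos (hpos κ hκ ν hν)).ne')
      (fun ν hν => (hasDerivAt_gammaFactor (hpos κ hκ ν hν)).differentiableAt)
      (fun ν hν => abs_logDeriv_gammaFactor_le (hκν κ hκ ν hν).1 (hκν κ hκ ν hν).2 hs)
    rwa [length_localParams hj, Nat.cast_succ] at h
  have houter := abs_logDeriv_list_prod_le
    (fun κ hκ => (List.prod_pos <| List.forall_mem_map.2 fun ν hν =>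
      gammaFactor_pos (hpos κ hκ ν hν)).ne')
    (fun κ hκ => differentiableAt_list_prod fun ν hν =>
      (hasDerivAt_gammaFactor (hpos κ hκ ν hν)).differentiableAt) hinner
  rw [length_localParams hi, Nat.cast_succ, ← rsGamma_eq_prod_gammaFactor] at houter
  have hd : 0 ≤ ((i : ℝ) + 1) * ((j : ℝ) + 1) := by positivity
  rw [← logDeriv_apply]
  linarith
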